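/- arXiv:1512.06682 — 4 statements merged into one kernel-verified Lean document; each statement's English description precedes it below -/
import Mathlib

section
/- Let K, L, m, j be integers with 1 ≤ L ≤ K-1, 1 ≤ m ≤ K-1, max(m-L+1, 0) ≤ j ≤ min(K-L, m+1) - 1, so that both binomial products below are over valid ranges. Then C(K-L, j) * C(L-1, m-j) ≥ C(K-L-1, j) * C(L, m-j) if and only if j ≥ m * (1 - L/K), i.e., if and only if j*K ≥ m*(K-L). -/
/-!
Since `C(n-1, j) * n = C(n, j) * (n - j)`, passing from `C(n, j)` to `C(n-1, j)` scales by
`(n - j) / n`. Multiplying the inequality by `(K - L) * L` and cancelling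
`C(K-L, j) * C(L, m-j)` therefore turns it into `(K - L - j) / (K - L) ≤ (L - (m - j)) / L`,
which is linear in `m` and `j` once cleared of denominators and is exactly
`m * (K - L) ≤ j * K`.
-/

namespace Nat

theorem choose_pred_mul_eq {n : ℕ} (hn : 0 < n) (k : ℕ) :
    (n - 1).choose k * n = n.choose k * (n - k) := by
  simpa only [Nat.sub_add_cancel hn] using choose_mul_succ_eq (n - 1) k

theorem choose_pred_mul_choose_le_iff {a b j d : ℕ} (ha : 0 < a) (hb : 0 < b) (hj : j ≤ a)
    (hd : d ≤ b) :
    (a - 1).choose j * b.choose d ≤ a.choose j * (b - 1).choose d ↔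
      (a - j) * b ≤ (b - d) * a := by
  have hc : 0 < a.choose j * b.choose d := Nat.mul_pos (choose_pos hj) (choose_pos hd)
  have hl : (a - 1).choose j * b.choose d * (a * b) = a.choose j * b.choose d * ((a - j) * b) :=
    calc _ = (a - 1).choose j * a * (b.choose d * b) := by ring
      _ = a.choose j * b.choose d * ((a - j) * b) := by rw [choose_pred_mul_eq ha]; ring
  have hr : a.choose j * (b - 1).choose d * (a * b) = a.choose j * b.choose d * ((b - d) * a) :=
    calc _ = a.choose j * a * ((b - 1).choose d * b) := by ring
      _ = a.choose j * b.choose d * ((b - d) * a) := by rw [choose_pred_mul_eq hb]; ring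
  rw [← Nat.mul_le_mul_right_iff (Nat.mul_pos ha hb), hl, hr, Nat.mul_le_mul_left_iff hc]

end Nat

theorem stmt_3_general (K L m j : ℕ) (hL : 1 ≤ L)
    (hj1 : m + 1 ≤ j + L) (hj2 : j + 1 ≤ K - L) (hj3 : j ≤ m) :
    (K - L - 1).choose j * L.choose (m - j) ≤ (K - L).choose j * (L - 1).choose (m - j) ↔
      m * (K - L) ≤ j * K := by
  obtain ⟨n, rfl⟩ : ∃ n, K = L + n := ⟨K - L, by omega⟩
  rw [Nat.add_sub_cancel_left] at hj2 ⊢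
  rw [Nat.choose_pred_mul_choose_le_iff (by omega) hL (by omega) (by omega)]
  zify [show j ≤ n by omega, show m - j ≤ L by omega, hj3]
  constructor <;> intro h <;> linarith

/-- Key step in Proposition 1: for `max(m-L+1,0) ≤ j ≤ min(K-L, m+1) - 1`
(encoded additively over ℕ), one has
`C(K-L, j) * C(L-1, m-j) ≥ C(K-L-1, j) * C(L, m-j)` iff `j*K ≥ m*(K-L)`,
i.e. iff `j ≥ m (1 - L/K)`. -/
theorem stmt_3 (K L m j : ℕ) (hL : 1 ≤ L) (hL' : L ≤ K - 1)
    (hm : 1 ≤ m) (hm' : m ≤ K - 1)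
    (hj1 : m + 1 ≤ j + L) (hj2 : j + 1 ≤ K - L) (hj3 : j ≤ m) :
    (K - L - 1).choose j * L.choose (m - j) ≤ (K - L).choose j * (L - 1).choose (m - j) ↔
      m * (K - L) ≤ j * K :=
  stmt_3_general K L m j hL hj1 hj2 hj3
end

section
/- Let K, L, m be integers with 1 ≤ m ≤ K-1 and 1 ≤ L ≤ K-1. Define f(j) = sum_{i = max(0, m-L+1)}^{min(j-1, K-L)} C(K-L, i)*C(L-1, m-i) + sum_{i = max(j, m-L)}^{min(m, K-L-1)} C(K-L-1, i)*C(L, m-i) for integers 0 ≤ j ≤ m+1. Then f attains its minimum over {0, 1, ..., m+1} at j = ⌈m(K-L)/K⌉. -/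
/-!
Write `a = K - L`, `A_j = C(a, j) C(L-1, m-j)` and `B_j = C(a-1, j) C(L, m-j)`. Moving the
threshold from `j` to `j + 1` adds `A_j` to the first sum and removes `B_j` from the second, so
`f (j+1) - f j = A_j - B_j` (each term present only when `j` lies in its index range). From
`n C(n-1, k) = C(n, k) (n-k)` one gets `L (a-j) A_j = a (L-m+j) B_j`, and
`a (L-m+j) - L (a-j) = K j - m a`. Hence `f` decreases while `K j < m a` and increases once
`K j ≥ m a`, so its minimum sits at `⌈m a / K⌉`.
-/

open Finset

theorem sum_Ico_min_succ {M : Type*} [AddCommMonoid M] (g : ℕ → M) (p q j : ℕ) :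
    ∑ i ∈ Ico p (min (j + 1) q), g i
      = ∑ i ∈ Ico p (min j q), g i + if j ∈ Ico p q then g j else 0 := by
  by_cases hj : j ∈ Ico p q
  · rw [if_pos hj]
    rw [mem_Ico] at hj
    rw [min_eq_left hj.2, min_eq_left hj.2.le, sum_Ico_succ_top hj.1]
  · rw [if_neg hj, add_zero]
    rw [mem_Ico, not_and_or, not_le, not_lt] at hj
    rcases hj with hj | hj
    · rw [Ico_eq_empty (by omega), Ico_eq_empty (by omega)]
    · rw [min_eq_right hj, min_eq_right (by omega)]

theorem sum_Icc_max {M : Type*} [AddCommMonoid M] (g : ℕ → M) (p q j : ℕ) :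
    ∑ i ∈ Icc (max j p) q, g i
      = (if j ∈ Icc p q then g j else 0) + ∑ i ∈ Icc (max (j + 1) p) q, g i := by
  by_cases hj : j ∈ Icc p q
  · rw [if_pos hj]
    rw [mem_Icc] at hj
    rw [max_eq_left hj.1, max_eq_left (by omega), ← insert_Icc_add_one_left_eq_Icc hj.2,
      sum_insert (by simp)]
  · rw [if_neg hj, zero_add]
    rw [mem_Icc, not_and_or, not_le, not_le] at hj
    rcases hj with hj | hj
    · rw [max_eq_right hj.le, max_eq_right (by omega)]
    · rw [Icc_eq_empty (by omega), Icc_eq_empty (by omega)]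

theorem mul_choose_pred_eq (n k : ℕ) : n * (n - 1).choose k = n.choose k * (n - k) := by
  cases n with
  | zero => simp
  | succ n =>
    simpa using (Nat.add_one_mul_choose_eq n k).trans (Nat.choose_succ_right_eq (n + 1) k)

theorem add_pred_div_le_iff {K : ℕ} (hK : 0 < K) (q j : ℕ) :
    (q + (K - 1)) / K ≤ j ↔ q ≤ K * j := by
  rw [show q + (K - 1) = q + K - 1 by omega, ← Nat.ceilDiv_eq_add_pred_div,
    ceilDiv_le_iff_le_mul hK]

theorem Nat.apply_le_of_succ_le_of_le_succ {α : Type*} [Preorder α] {F : ℕ → α} {c : ℕ}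
    (hdown : ∀ j < c, F (j + 1) ≤ F j) (hup : ∀ j, c ≤ j → F j ≤ F (j + 1)) (j : ℕ) :
    F c ≤ F j := by
  rcases le_total c j with hcj | hjc
  · exact Nat.rel_of_forall_rel_succ_of_le_of_le (· ≤ ·) hup le_rfl hcj
  · have hrev : ∀ n, F (c - n) ≤ F (c - (n + 1)) := fun n => by
      rcases lt_or_ge n c with hn | hn
      · simpa [show c - n = c - (n + 1) + 1 by omega] using hdown (c - (n + 1)) (by omega)
      · rw [Nat.sub_eq_zero_of_le hn, Nat.sub_eq_zero_of_le (by omega)]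
    simpa [Nat.sub_sub_self hjc] using
      Nat.rel_of_forall_rel_succ_of_le (· ≤ ·) hrev (Nat.zero_le (c - j))

theorem mul_choose_mul_choose_eq (a L m j : ℕ) :
    L * (a - j) * (a.choose j * (L - 1).choose (m - j))
      = a * (L - (m - j)) * ((a - 1).choose j * L.choose (m - j)) := by
  calc L * (a - j) * (a.choose j * (L - 1).choose (m - j))
      = (a.choose j * (a - j)) * (L * (L - 1).choose (m - j)) := by ring
    _ = (a * (a - 1).choose j) * (L.choose (m - j) * (L - (m - j))) := by
      rw [mul_choose_pred_eq, mul_choose_pred_eq]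
    _ = a * (L - (m - j)) * ((a - 1).choose j * L.choose (m - j)) := by ring

theorem mul_sub_sub_add_mul_eq {a L m j : ℕ} (hjm : j ≤ m) (hmL : m ≤ L + j) (hja : j ≤ a) :
    a * (L - (m - j)) + m * a = L * (a - j) + (a + L) * j := by
  zify [hjm, hja, show m - j ≤ L by omega]
  ring

theorem choose_mul_choose_le_of_mul_le {a L m j : ℕ} (hL : 0 < L) (hjm : j ≤ m)
    (hmL : m ≤ L + j) (hja : j < a) (h : m * a ≤ (a + L) * j) :
    (a - 1).choose j * L.choose (m - j) ≤ a.choose j * (L - 1).choose (m - j) := by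
  have hcoef : L * (a - j) ≤ a * (L - (m - j)) := by
    linarith [mul_sub_sub_add_mul_eq hjm hmL hja.le]
  refine Nat.le_of_mul_le_mul_left ?_ (Nat.mul_pos hL (Nat.sub_pos_of_lt hja))
  calc L * (a - j) * ((a - 1).choose j * L.choose (m - j))
      ≤ a * (L - (m - j)) * ((a - 1).choose j * L.choose (m - j)) :=
        Nat.mul_le_mul_right _ hcoef
    _ = L * (a - j) * (a.choose j * (L - 1).choose (m - j)) :=
        (mul_choose_mul_choose_eq a L m j).symm

theorem choose_mul_choose_le_of_le_mul {a L m j : ℕ} (hL : 0 < L) (hjm : j ≤ m)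
    (hmL : m ≤ L + j) (hja : j < a) (h : (a + L) * j ≤ m * a) :
    a.choose j * (L - 1).choose (m - j) ≤ (a - 1).choose j * L.choose (m - j) := by
  have hcoef : a * (L - (m - j)) ≤ L * (a - j) := by
    linarith [mul_sub_sub_add_mul_eq hjm hmL hja.le]
  refine Nat.le_of_mul_le_mul_left ?_ (Nat.mul_pos hL (Nat.sub_pos_of_lt hja))
  calc L * (a - j) * (a.choose j * (L - 1).choose (m - j))
      = a * (L - (m - j)) * ((a - 1).choose j * L.choose (m - j)) :=
        mul_choose_mul_choose_eq a L m j
    _ ≤ L * (a - j) * ((a - 1).choose j * L.choose (m - j)) := Nat.mul_le_mul_right _ hcoef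

/-- The function `f` of the statement, with `a` standing for `K - L`. -/
def deliveryCount (a L m j : ℕ) : ℕ :=
  (∑ i ∈ Ico (m + 1 - L) (min j (a + 1)), a.choose i * (L - 1).choose (m - i))
    + ∑ i ∈ Icc (max j (m - L)) (min m (a - 1)), (a - 1).choose i * L.choose (m - i)

theorem deliveryCount_succ_add (a L m j : ℕ) :
    deliveryCount a L m (j + 1)
        + (if j ∈ Icc (m - L) (min m (a - 1)) then (a - 1).choose j * L.choose (m - j) else 0)
      = deliveryCount a L m j
        + (if j ∈ Ico (m + 1 - L) (a + 1) then a.choose j * (L - 1).choose (m - j) else 0) := by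
  rw [deliveryCount, deliveryCount, sum_Ico_min_succ _ _ _ j, sum_Icc_max _ _ _ j]
  ring

theorem deliveryCount_le_succ {a L m j : ℕ} (ha : 0 < a) (hL : 0 < L) (hm : m < a + L)
    (h : m * a ≤ (a + L) * j) : deliveryCount a L m j ≤ deliveryCount a L m (j + 1) := by
  have step := deliveryCount_succ_add a L m j
  simp only [mem_Icc, mem_Ico] at step
  split_ifs at step with hB hA hA
  · have := choose_mul_choose_le_of_mul_le hL (hB.2.trans (min_le_left _ _)) (by omega)
      (by omega) h
    omega
  · -- the `B`-term at `j = m - L` has no `A`-partner, but `m < a + L` rules this index out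
    have hjL : j + L = m := by omega
    subst hjL
    nlinarith
  all_goals omega

theorem deliveryCount_succ_le {a L m j : ℕ} (hL : 0 < L) (hm : m < a + L)
    (h : (a + L) * j < m * a) : deliveryCount a L m (j + 1) ≤ deliveryCount a L m j := by
  have hjm : j < m := by nlinarith
  have hja : j < a := by nlinarith
  have step := deliveryCount_succ_add a L m j
  simp only [mem_Icc, mem_Ico] at step
  split_ifs at step with hB hA
  · have := choose_mul_choose_le_of_le_mul hL hjm.le (by omega) hja h.le
    omega
  all_goals omega

theorem stmt_4_general (K L m : ℕ) (hm' : m ≤ K - 1) (hL : 1 ≤ L) (hL' : L ≤ K - 1)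
    (f : ℕ → ℕ)
    (hf : ∀ j, f j =
      (∑ i ∈ Finset.Ico (m + 1 - L) (min j (K - L + 1)),
        (K - L).choose i * (L - 1).choose (m - i))
      + ∑ i ∈ Finset.Icc (max j (m - L)) (min m (K - L - 1)),
        (K - L - 1).choose i * L.choose (m - i)) :
    ∀ j ≤ m + 1, f ((m * (K - L) + (K - 1)) / K) ≤ f j := by
  obtain rfl : f = deliveryCount (K - L) L m := funext hf
  have hK : K - L + L = K := by omega
  have hceil := add_pred_div_le_iff (show 0 < K by omega) (m * (K - L))
  intro j _
  refine Nat.apply_le_of_succ_le_of_le_succ (fun i hi => ?_) (fun i hi => ?_) j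
  · refine deliveryCount_succ_le hL (by omega) ?_
    rw [hK]
    exact lt_of_not_ge fun h => hi.not_ge ((hceil i).2 h)
  · refine deliveryCount_le_succ (by omega) hL (by omega) ?_
    rw [hK]
    exact (hceil i).1 hi

/-- Proposition 1: the message count
`f(j) = ∑_{i=max(0,m-L+1)}^{min(j-1,K-L)} C(K-L,i) C(L-1,m-i)
      + ∑_{i=max(j,m-L)}^{min(m,K-L-1)} C(K-L-1,i) C(L,m-i)`
is minimized over `0 ≤ j ≤ m+1` at `j = ⌈m(K-L)/K⌉`.
(The first sum is written as an `Ico`: `i ≥ m+1-L` and `i < min(j, K-L+1)`,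
which is the same index range as `max(0,m-L+1) ≤ i ≤ min(j-1, K-L)`.) -/
theorem stmt_4 (K L m : ℕ) (hm : 1 ≤ m) (hm' : m ≤ K - 1) (hL : 1 ≤ L) (hL' : L ≤ K - 1)
    (f : ℕ → ℕ)
    (hf : ∀ j, f j =
      (∑ i ∈ Finset.Ico (m + 1 - L) (min j (K - L + 1)),
        (K - L).choose i * (L - 1).choose (m - i))
      + ∑ i ∈ Finset.Icc (max j (m - L)) (min m (K - L - 1)),
        (K - L - 1).choose i * L.choose (m - i)) :
    ∀ j ≤ m + 1, f ((m * (K - L) + (K - 1)) / K) ≤ f j :=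
  stmt_4_general K L m hm' hL hL' f hf
end

section
/- For every integer K ≥ 2, every integer m with 1 ≤ m ≤ K-1, and every integer L with 1 ≤ L ≤ K-1, there exists an integer j with 0 ≤ j ≤ m+1 such that R_K(m/K, L, j) ≤ 2 - m/K, where R_K(m/K, L, j) = 1 + [sum_{i = max(0, m-L+1)}^{min(j-1, K-L)} C(K-L, i)*C(L-1, m-i) + sum_{i = max(j, m-L)}^{min(m, K-L-1)} C(K-L-1, i)*C(L, m-i)] / C(K, m). Moreover the inequality is strict unless K is odd and m = K-1. -/
/-!
Write `a i = C(K-L, i) C(L-1, m-i)` and `b i = C(K-L-1, i) C(L, m-i)` (both instances of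
`vandermondeTerm`). By Vandermonde both sum to `C(K-1, m)` over `0 ≤ i ≤ m`, and
`2 - m/K = 1 + C(K-1, m)/C(K, m)`, so it suffices to find `j` with
`∑_{i<j} a i + ∑_{j≤i≤m} b i < C(K-1, m)`. The two sequences satisfy
`L (K-L-i) a i = (K-L) (i+L-m) b i`, hence `a i ≤ b i` as long as `K i ≤ (K-L) m`. Taking
`j = ⌊(K-L) m / K⌋ + 1` therefore gives `∑_{i<j} a i ≤ ∑_{i<j} b i`, strictly because
`a (m-L) < b (m-L)` (with `m-L` truncated at `0`).
-/

open Finset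

theorem Nat.choose_mul_sub_eq_mul_choose_pred (n k : ℕ) :
    n.choose k * (n - k) = n * (n - 1).choose k := by
  cases n with
  | zero => simp
  | succ n => simpa [mul_comm] using (Nat.choose_mul_succ_eq n k).symm

theorem Nat.cast_choose_pred_div_choose {F : Type*} [Field F] [CharZero F] {n m : ℕ}
    (hmn : m ≤ n) : ((n - 1).choose m : F) / n.choose m = 1 - m / n := by
  rcases Nat.eq_zero_or_pos n with rfl | hn
  · simp_all
  have h : (n.choose m : F) * (n - m) = n * (n - 1).choose m := by
    rw [← Nat.cast_sub hmn]
    exact_mod_cast Nat.choose_mul_sub_eq_mul_choose_pred n m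
  have hc : (n.choose m : F) ≠ 0 := by exact_mod_cast (Nat.choose_pos hmn).ne'
  have hn' : (n : F) ≠ 0 := by exact_mod_cast hn.ne'
  field_simp
  linear_combination -h

theorem one_add_div_choose_lt_two_sub_div {n m s : ℕ} (hmn : m ≤ n)
    (hs : s < (n - 1).choose m) : (1 : ℚ) + s / n.choose m < 2 - m / n := by
  have hc : (0 : ℚ) < n.choose m := by exact_mod_cast Nat.choose_pos hmn
  calc (1 : ℚ) + s / n.choose m < 1 + ((n - 1).choose m : ℚ) / n.choose m := by
        gcongr
    _ = 2 - m / n := by rw [Nat.cast_choose_pred_div_choose hmn]; ring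

def vandermondeTerm (p q m i : ℕ) : ℕ := p.choose i * q.choose (m - i)

section VandermondeTerm

variable {p q m : ℕ}

theorem sum_range_vandermondeTerm (p q m : ℕ) :
    ∑ i ∈ range (m + 1), vandermondeTerm p q m i = (p + q).choose m := by
  rw [Nat.add_choose_eq, Nat.sum_antidiagonal_eq_sum_range_succ_mk]
  rfl

theorem vandermondeTerm_mul_eq (p q m i : ℕ) :
    vandermondeTerm p (q - 1) m i * (q * (p - i)) =
      vandermondeTerm (p - 1) q m i * (p * (q - (m - i))) := by
  have hp := Nat.choose_mul_sub_eq_mul_choose_pred p i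
  have hq := Nat.choose_mul_sub_eq_mul_choose_pred q (m - i)
  unfold vandermondeTerm
  calc p.choose i * (q - 1).choose (m - i) * (q * (p - i))
      = (p.choose i * (p - i)) * (q * (q - 1).choose (m - i)) := by ring
    _ = (p * (p - 1).choose i) * (q.choose (m - i) * (q - (m - i))) := by rw [hp, hq]
    _ = _ := by ring

theorem vandermondeTerm_le_of_mul_le {i : ℕ} (hp : 0 < p) (hq : 0 < q) (hm : m < p + q)
    (hi : (p + q) * i ≤ p * m) :
    vandermondeTerm p (q - 1) m i ≤ vandermondeTerm (p - 1) q m i := by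
  have him : i ≤ m := by
    by_contra! h
    nlinarith
  have hip : i < p := by
    by_contra! h
    nlinarith
  have hweight : p * (q - (m - i)) ≤ q * (p - i) := by
    rcases le_total (m - i) q with h | h
    · zify [h, him, hip.le] at hi ⊢
      nlinarith
    · simp [Nat.sub_eq_zero_of_le h]
  refine Nat.le_of_mul_le_mul_right ?_ (Nat.mul_pos hq (Nat.sub_pos_of_lt hip))
  calc vandermondeTerm p (q - 1) m i * (q * (p - i))
      = vandermondeTerm (p - 1) q m i * (p * (q - (m - i))) := vandermondeTerm_mul_eq p q m i
    _ ≤ vandermondeTerm (p - 1) q m i * (q * (p - i)) := Nat.mul_le_mul_left _ hweight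

theorem vandermondeTerm_lt_at_sub (hq : 0 < q) (hm₀ : 0 < m) (hm : m < p + q) :
    vandermondeTerm p (q - 1) m (m - q) < vandermondeTerm (p - 1) q m (m - q) := by
  unfold vandermondeTerm
  rcases le_total q m with h | h
  · rw [Nat.sub_sub_self h, Nat.choose_eq_zero_of_lt (Nat.sub_one_lt hq.ne'), Nat.choose_self]
    simpa using Nat.choose_pos (by omega : m - q ≤ p - 1)
  · rw [Nat.sub_eq_zero_of_le h, Nat.choose_zero_right, Nat.choose_zero_right, Nat.sub_zero,
      one_mul, one_mul]
    obtain ⟨q, rfl⟩ := Nat.exists_eq_add_of_lt hq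
    obtain ⟨m, rfl⟩ := Nat.exists_eq_add_of_lt hm₀
    rw [zero_add, zero_add, Nat.add_sub_cancel, Nat.choose_succ_succ']
    simpa using Nat.choose_pos (by omega : m ≤ q)

theorem sum_vandermondeTerm_lt (hp : 0 < p) (hq : 0 < q) (hm₀ : 0 < m) (hm : m < p + q) :
    ∑ i ∈ range (p * m / (p + q) + 1), vandermondeTerm p (q - 1) m i
      + ∑ i ∈ Ico (p * m / (p + q) + 1) (m + 1), vandermondeTerm (p - 1) q m i
      < (p + q - 1).choose m := by
  set t := p * m / (p + q)
  have hpq : 0 < p + q := by omega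
  have ht : t ≤ m := Nat.div_le_of_le_mul (by nlinarith)
  have hsub : m - q ≤ t := by
    refine (Nat.le_div_iff_mul_le hpq).2 ?_
    rcases le_total q m with h | h
    · zify [h]
      nlinarith
    · simp [Nat.sub_eq_zero_of_le h]
  have hlt : ∑ i ∈ range (t + 1), vandermondeTerm p (q - 1) m i
      < ∑ i ∈ range (t + 1), vandermondeTerm (p - 1) q m i := by
    refine Finset.sum_lt_sum (fun i hi => vandermondeTerm_le_of_mul_le hp hq hm ?_)
      ⟨m - q, mem_range.2 (Nat.lt_succ_of_le hsub), vandermondeTerm_lt_at_sub hq hm₀ hm⟩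
    rw [mul_comm]
    exact (Nat.le_div_iff_mul_le hpq).1 (Nat.lt_succ_iff.1 (mem_range.1 hi))
  calc _ < ∑ i ∈ range (t + 1), vandermondeTerm (p - 1) q m i
        + ∑ i ∈ Ico (t + 1) (m + 1), vandermondeTerm (p - 1) q m i := by omega
    _ = (p - 1 + q).choose m := by
      rw [sum_range_add_sum_Ico _ (Nat.succ_le_succ ht), sum_range_vandermondeTerm]
    _ = (p + q - 1).choose m := by rw [Nat.sub_add_comm hp]

theorem sum_Ico_eq_sum_range_vandermondeTerm (hq : 0 < q) (j : ℕ) :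
    ∑ i ∈ Ico (m + 1 - q) (min j (p + 1)), p.choose i * (q - 1).choose (m - i) =
      ∑ i ∈ range j, vandermondeTerm p (q - 1) m i := by
  refine Finset.sum_subset (fun i hi => ?_) (fun i hi hni => ?_)
  · simp only [mem_Ico, mem_range] at hi ⊢
    omega
  · simp only [mem_Ico, mem_range, not_and_or, not_le, not_lt] at hi hni
    rcases hni with h | h
    · rw [Nat.choose_eq_zero_of_lt (by omega : q - 1 < m - i), Nat.mul_zero]
    · rw [Nat.choose_eq_zero_of_lt (by omega : p < i), Nat.zero_mul]

theorem sum_Icc_eq_sum_Ico_vandermondeTerm (j : ℕ) :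
    ∑ i ∈ Icc (max j (m - q)) (min m (p - 1)), (p - 1).choose i * q.choose (m - i) =
      ∑ i ∈ Ico j (m + 1), vandermondeTerm (p - 1) q m i := by
  refine Finset.sum_subset (fun i hi => ?_) (fun i hi hni => ?_)
  · simp only [mem_Icc, mem_Ico] at hi ⊢
    omega
  · simp only [mem_Icc, mem_Ico, not_and_or, not_le] at hi hni
    rcases hni with h | h
    · rw [Nat.choose_eq_zero_of_lt (by omega : q < m - i), Nat.mul_zero]
    · rw [Nat.choose_eq_zero_of_lt (by omega : p - 1 < i), Nat.zero_mul]

end VandermondeTerm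

theorem stmt_9_general (K m L : ℕ) (hm : 1 ≤ m) (hm' : m ≤ K - 1)
    (hL : 1 ≤ L) (hL' : L ≤ K - 1) :
    ∃ j ≤ m + 1,
      (1 : ℚ) +
        (((∑ i ∈ Finset.Ico (m + 1 - L) (min j (K - L + 1)),
            (K - L).choose i * (L - 1).choose (m - i))
          + ∑ i ∈ Finset.Icc (max j (m - L)) (min m (K - L - 1)),
            (K - L - 1).choose i * L.choose (m - i) : ℕ) : ℚ) / (K.choose m)
        ≤ 2 - (m : ℚ) / K ∧
      (¬(Odd K ∧ m = K - 1) →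
        (1 : ℚ) +
          (((∑ i ∈ Finset.Ico (m + 1 - L) (min j (K - L + 1)),
              (K - L).choose i * (L - 1).choose (m - i))
            + ∑ i ∈ Finset.Icc (max j (m - L)) (min m (K - L - 1)),
              (K - L - 1).choose i * L.choose (m - i) : ℕ) : ℚ) / (K.choose m)
          < 2 - (m : ℚ) / K) := by
  have hsum := sum_vandermondeTerm_lt (p := K - L) (q := L) (m := m) (by omega) hL hm (by omega)
  rw [Nat.sub_add_cancel (by omega : L ≤ K)] at hsum
  refine ⟨(K - L) * m / K + 1,
    Nat.succ_le_succ (Nat.div_le_of_le_mul (Nat.mul_le_mul_right m (Nat.sub_le K L))), ?_⟩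
  rw [sum_Ico_eq_sum_range_vandermondeTerm hL, sum_Icc_eq_sum_Ico_vandermondeTerm]
  have key := one_add_div_choose_lt_two_sub_div (by omega) hsum
  exact ⟨key.le, fun _ => key⟩

/-- Proposition 2: there exists a threshold `0 ≤ j ≤ m+1` with
`R_K(m/K, L, j) ≤ 2 - m/K`, with strict inequality unless `K` is odd and
`m = K-1`. -/
theorem stmt_9 (K m L : ℕ) (hK : 2 ≤ K) (hm : 1 ≤ m) (hm' : m ≤ K - 1)
    (hL : 1 ≤ L) (hL' : L ≤ K - 1) :
    ∃ j ≤ m + 1,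
      (1 : ℚ) +
        (((∑ i ∈ Finset.Ico (m + 1 - L) (min j (K - L + 1)),
            (K - L).choose i * (L - 1).choose (m - i))
          + ∑ i ∈ Finset.Icc (max j (m - L)) (min m (K - L - 1)),
            (K - L - 1).choose i * L.choose (m - i) : ℕ) : ℚ) / (K.choose m)
        ≤ 2 - (m : ℚ) / K ∧
      (¬(Odd K ∧ m = K - 1) →
        (1 : ℚ) +
          (((∑ i ∈ Finset.Ico (m + 1 - L) (min j (K - L + 1)),
              (K - L).choose i * (L - 1).choose (m - i))
            + ∑ i ∈ Finset.Icc (max j (m - L)) (min m (K - L - 1)),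
              (K - L - 1).choose i * L.choose (m - i) : ℕ) : ℚ) / (K.choose m)
          < 2 - (m : ℚ) / K) :=
  stmt_9_general K m L hm hm' hL hL'
end

section
/- Let V be a vector space over GF(2) (the field with two elements), let a : Finset ℕ → V be an assignment of vectors to finite index sets, and let 1 and ℓ be two distinct indices. For a finite set T of indices with 1 ∉ T and ℓ ∉ T, define M(T) = a(T ∪ S) + Σ_{t ∈ T} a(((T ∪ {1}) \ {t}) ∪ S) for a fixed finite set S disjoint from T ∪ {1, ℓ}. Then M(T) + Σ_{t ∈ T} M((T ∪ {ℓ}) \ {t}) = a(T ∪ S) + Σ_{t ∈ T} a(((T ∪ {ℓ}) \ {t}) ∪ S). -/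
/-!
Both sides only involve `b U := a (U ∪ S)`. Expanding `M((T ∪ {ℓ}) \ {t})`, the summand for `s = ℓ`
reproduces the `t`-th summand of `M(T)`, while the summands for `s ∈ T \ {t}` are values of `b` at
`(T ∪ {1, ℓ}) \ {t, s}`, which is symmetric in `t` and `s`. Over GF(2) the first family cancels
against `M(T)` and the second cancels pairwise.
-/

open Finset

section

variable {α V : Type*} [DecidableEq α] [AddCommGroup V]

theorem Finset.sum_sum_erase_eq_zero_of_symm [Module (ZMod 2) V] (T : Finset α) (f : α → α → V)
    (hf : ∀ t ∈ T, ∀ s ∈ T, f t s = f s t) :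
    ∑ t ∈ T, ∑ s ∈ T.erase t, f t s = 0 := by
  rw [sum_sigma']
  refine sum_involution (fun p _ => ⟨p.2, p.1⟩) ?_ ?_ ?_ fun _ _ => rfl
  · rintro ⟨t, s⟩ hp
    rw [mem_sigma, mem_erase] at hp
    rw [hf t hp.1 s hp.2.2]
    exact ZModModule.add_self _
  · rintro ⟨t, s⟩ hp _ h
    rw [mem_sigma, mem_erase] at hp
    exact hp.2.1 (congrArg Sigma.fst h)
  · rintro ⟨t, s⟩ hp
    rw [mem_sigma, mem_erase] at hp ⊢
    exact ⟨hp.2.2, hp.2.1.symm, hp.1⟩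

/-- The coded message `M(U)` of the delivery scheme, with `b U` standing for `a (U ∪ S)` and `i`
for the distinguished index `1`. -/
def codedMessage (b : Finset α → V) (i : α) (U : Finset α) : V :=
  b U + ∑ t ∈ U, b ((insert i U).erase t)

theorem codedMessage_erase_insert (b : Finset α → V) {i ℓ t : α} {T : Finset α}
    (hℓi : ℓ ≠ i) (hℓT : ℓ ∉ T) (hti : t ≠ i) (htℓ : t ≠ ℓ) :
    codedMessage b i ((insert ℓ T).erase t) =
      b ((insert ℓ T).erase t) + b ((insert i T).erase t) +
        ∑ s ∈ T.erase t, b (((insert i (insert ℓ T)).erase t).erase s) := by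
  have hℓ : ℓ ∉ T.erase t := fun h => hℓT (mem_of_mem_erase h)
  have h_insert_erase : insert i ((insert ℓ T).erase t) = (insert i (insert ℓ T)).erase t := by
    rw [erase_insert_of_ne hti.symm]
  have h_erase_ℓ : (insert i (insert ℓ (T.erase t))).erase ℓ = (insert i T).erase t := by
    rw [erase_insert_of_ne hℓi.symm, erase_insert hℓ, erase_insert_of_ne hti.symm]
  rw [codedMessage, erase_insert_of_ne htℓ.symm, sum_insert hℓ, h_erase_ℓ,
    ← erase_insert_of_ne htℓ.symm, h_insert_erase, add_assoc]

theorem codedMessage_add_sum_codedMessage_erase_insert [Module (ZMod 2) V] (b : Finset α → V) {i ℓ : α}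
    {T : Finset α} (hℓi : ℓ ≠ i) (hiT : i ∉ T) (hℓT : ℓ ∉ T) :
    codedMessage b i T + ∑ t ∈ T, codedMessage b i ((insert ℓ T).erase t) =
      b T + ∑ t ∈ T, b ((insert ℓ T).erase t) := by
  set U := insert i (insert ℓ T)
  have h_expand : ∀ t ∈ T, codedMessage b i ((insert ℓ T).erase t) =
      b ((insert ℓ T).erase t) + b ((insert i T).erase t) +
        ∑ s ∈ T.erase t, b ((U.erase t).erase s) := fun t ht =>
    codedMessage_erase_insert b hℓi hℓT (ne_of_mem_of_not_mem ht hiT)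
      (ne_of_mem_of_not_mem ht hℓT)
  have h_pairs : ∑ t ∈ T, ∑ s ∈ T.erase t, b ((U.erase t).erase s) = 0 :=
    T.sum_sum_erase_eq_zero_of_symm _ fun _ _ _ _ => by rw [erase_right_comm]
  rw [sum_congr rfl h_expand, sum_add_distrib, sum_add_distrib, h_pairs, add_zero,
    codedMessage, add_assoc, add_comm (∑ t ∈ T, _), add_assoc,
    ZModModule.add_self, add_zero]

end

theorem stmt_11_general (V : Type*) [AddCommGroup V] [Module (ZMod 2) V]
    (a : Finset ℕ → V) (ℓ : ℕ) (hℓ : ℓ ≠ 1)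
    (T S : Finset ℕ) (h1T : 1 ∉ T) (hℓT : ℓ ∉ T)
    (M : Finset ℕ → V)
    (hM : ∀ T' : Finset ℕ,
      M T' = a (T' ∪ S) + ∑ t ∈ T', a (((T' ∪ {1}) \ {t}) ∪ S)) :
    M T + ∑ t ∈ T, M ((T ∪ {ℓ}) \ {t}) =
      a (T ∪ S) + ∑ t ∈ T, a (((T ∪ {ℓ}) \ {t}) ∪ S) := by
  have hM' : M = codedMessage (fun U => a (U ∪ S)) 1 := funext fun U => by
    rw [hM, codedMessage]
    simp only [union_singleton, sdiff_singleton_eq_erase]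
  subst hM'
  simp only [union_singleton, sdiff_singleton_eq_erase]
  exact codedMessage_add_sum_codedMessage_erase_insert _ hℓ h1T hℓT

/-- The key cancellation identity (Equation (1)): over a GF(2) vector space,
with `M(T') = a(T' ∪ S) + ∑_{t ∈ T'} a(((T' ∪ {1}) \ {t}) ∪ S)`,
`M(T) + ∑_{t ∈ T} M((T ∪ {ℓ}) \ {t}) = a(T ∪ S) + ∑_{t ∈ T} a(((T ∪ {ℓ}) \ {t}) ∪ S)`. -/
theorem stmt_11 (V : Type*) [AddCommGroup V] [Module (ZMod 2) V]
    (a : Finset ℕ → V) (ℓ : ℕ) (hℓ : ℓ ≠ 1)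
    (T S : Finset ℕ) (h1T : 1 ∉ T) (hℓT : ℓ ∉ T)
    (hS : Disjoint S (T ∪ {1, ℓ}))
    (M : Finset ℕ → V)
    (hM : ∀ T' : Finset ℕ,
      M T' = a (T' ∪ S) + ∑ t ∈ T', a (((T' ∪ {1}) \ {t}) ∪ S)) :
    M T + ∑ t ∈ T, M ((T ∪ {ℓ}) \ {t}) =
      a (T ∪ S) + ∑ t ∈ T, a (((T ∪ {ℓ}) \ {t}) ∪ S) :=
  stmt_11_general V a ℓ hℓ T S h1T hℓT M hM
end
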